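/- arXiv:2601.20123 — 6 statements merged into one kernel-verified Lean document; each statement's English description precedes it below -/
import Mathlib

section
/- In the modified SIR model, if additionally I(t) ≥ 0 and S(t) ≥ 0 for all t ≥ 0 and I is continuous on [0,∞), then the limits S_∞ = lim_{t→∞} S(t) and R_∞ = lim_{t→∞} R(t) exist (as finite real numbers), and I(t) → 0 as t → ∞. -/
open Filter

/-- **Existence of the long-term limits.**
If additionally `I t ≥ 0` and `S t ≥ 0` for all `t ≥ 0` and `I` is continuous
on `[0,∞)`, then `S(t)` and `R(t)` converge to finite limits `S_∞`, `R_∞` as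
`t → ∞`, and `I(t) → 0` as `t → ∞`. -/
theorem modifiedSIR_limits_exist
    (N β γ a : ℝ) (hN : 0 < N) (hβ : 0 < β) (hγ : 0 < γ)
    (ha : a ∈ Set.Icc (0:ℝ) 1)
    (S I R : ℝ → ℝ)
    (hS : Differentiable ℝ S) (hI : Differentiable ℝ I) (hR : Differentiable ℝ R)
    (hS' : ∀ t ≥ (0:ℝ), HasDerivAt S (-(a * β / N) * I t * S t) t)
    (hI' : ∀ t ≥ (0:ℝ), HasDerivAt I ((a * β / N) * I t * S t - γ * I t) t)
    (hR' : ∀ t ≥ (0:ℝ), HasDerivAt R (γ * I t) t)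
    (hS0 : 0 ≤ S 0) (hI0 : 0 ≤ I 0) (hR0 : 0 ≤ R 0)
    (hsum : S 0 + I 0 + R 0 = N)
    (hpos : ∀ t ≥ (0:ℝ), 0 ≤ I t ∧ 0 ≤ S t)
    (hIcont : ContinuousOn I (Set.Ici 0)) :
    (∃ Sinf : ℝ, Tendsto S atTop (nhds Sinf)) ∧
    (∃ Rinf : ℝ, Tendsto R atTop (nhds Rinf)) ∧
    Tendsto I atTop (nhds 0) := by
  obtain ⟨ha0, ha1⟩ := ha
  have hc0 : 0 ≤ a * β / N := by positivity
  -- conservation of total population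
  have hTc : ∀ t ≥ (0:ℝ), S t + I t + R t = N := by
    intro t ht
    have key := constant_of_has_deriv_right_zero
      (f := fun t => S t + I t + R t) (a := 0) (b := t)
      (((hS.add hI).add hR).continuous.continuousOn)
      (fun x hx => by
        have h := ((hS' x hx.1).add (hI' x hx.1)).add (hR' x hx.1)
        have h0 : (-(a * β / N) * I x * S x + (a * β / N * I x * S x - γ * I x) + γ * I x) = 0 := by
          ring
        rw [h0] at h
        exact h.hasDerivWithinAt)
      t (Set.right_mem_Icc.mpr ht)
    simpa [hsum] using key
  -- S is antitone on [0, ∞)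
  have hSanti : AntitoneOn S (Set.Ici 0) := by
    apply antitoneOn_of_deriv_nonpos (convex_Ici 0) hS.continuous.continuousOn
      hS.differentiableOn
    intro x hx
    rw [interior_Ici] at hx
    rw [(hS' x hx.le).deriv]
    obtain ⟨hI1, hS1⟩ := hpos x hx.le
    have : 0 ≤ a * β / N * I x * S x := by positivity
    linarith
  -- R is monotone on [0, ∞)
  have hRmono : MonotoneOn R (Set.Ici 0) := by
    apply monotoneOn_of_deriv_nonneg (convex_Ici 0) hR.continuous.continuousOn
      hR.differentiableOn
    intro x hx
    rw [interior_Ici] at hx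
    rw [(hR' x hx.le).deriv]
    exact mul_nonneg hγ.le (hpos x hx.le).1
  -- bounds
  have hRle : ∀ t ≥ (0:ℝ), R t ≤ N := by
    intro t ht
    obtain ⟨hI1, hS1⟩ := hpos t ht
    have := hTc t ht
    linarith
  have hR0' : ∀ t ≥ (0:ℝ), 0 ≤ R t := fun t ht =>
    le_trans hR0 (hRmono (Set.self_mem_Ici) ht ht)
  -- limit of S via composed function
  have hSeq : (fun t => S (max t 0)) =ᶠ[atTop] S :=
    (eventually_ge_atTop (0:ℝ)).mono fun t ht => by
      show S (max t 0) = S t; rw [max_eq_left ht]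
  have hSanti' : Antitone (fun t => S (max t 0)) := fun s t hst =>
    hSanti (le_max_right s 0) (le_max_right t 0) (max_le_max hst le_rfl)
  have hSbdd : BddBelow (Set.range fun t => S (max t 0)) := by
    refine ⟨0, ?_⟩
    rintro y ⟨t, rfl⟩
    exact (hpos _ (le_max_right t 0)).2
  have hSlim : Tendsto S atTop (nhds (⨅ t, S (max t 0))) :=
    (tendsto_atTop_ciInf hSanti' hSbdd).congr' hSeq
  -- limit of R
  have hReq : (fun t => R (max t 0)) =ᶠ[atTop] R :=
    (eventually_ge_atTop (0:ℝ)).mono fun t ht => by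
      show R (max t 0) = R t; rw [max_eq_left ht]
  have hRmono' : Monotone (fun t => R (max t 0)) := fun s t hst =>
    hRmono (le_max_right s 0) (le_max_right t 0) (max_le_max hst le_rfl)
  have hRbdd : BddAbove (Set.range fun t => R (max t 0)) := by
    refine ⟨N, ?_⟩
    rintro y ⟨t, rfl⟩
    exact hRle _ (le_max_right t 0)
  have hRlim : Tendsto R atTop (nhds (⨆ t, R (max t 0))) :=
    (tendsto_atTop_ciSup hRmono' hRbdd).congr' hReq
  set Sinf := ⨅ t, S (max t 0)
  set Rinf := ⨆ t, R (max t 0)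
  set L := N - Sinf - Rinf with hLdef
  -- I tends to L
  have hIlim : Tendsto I atTop (nhds L) := by
    have h1 : Tendsto (fun t => N - S t - R t) atTop (nhds L) :=
      (tendsto_const_nhds.sub hSlim).sub hRlim
    apply h1.congr'
    exact (eventually_ge_atTop (0:ℝ)).mono fun t ht => by
      have := hTc t ht
      show N - S t - R t = I t
      linarith
  have hL0 : 0 ≤ L :=
    ge_of_tendsto hIlim ((eventually_ge_atTop (0:ℝ)).mono fun t ht => (hpos t ht).1)
  -- L = 0
  have hLzero : L = 0 := by
    by_contra hne
    have hL : 0 < L := lt_of_le_of_ne hL0 (Ne.symm hne)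
    have hev : ∀ᶠ t in atTop, L / 2 < I t :=
      hIlim.eventually (eventually_gt_nhds (by linarith))
    obtain ⟨t₀, ht₀⟩ := ((hev.and (eventually_ge_atTop (0:ℝ))).exists_forall_of_atTop)
    set d := γ * L / 2 with hd
    have hdpos : 0 < d := by positivity
    -- g = R - d * id monotone on [t₀, ∞)
    have hgmono : MonotoneOn (fun t => R t - d * t) (Set.Ici t₀) := by
      apply monotoneOn_of_deriv_nonneg (convex_Ici t₀)
        ((hR.sub (differentiable_fun_id.const_mul d)).continuous.continuousOn)
        ((hR.sub (differentiable_fun_id.const_mul d)).differentiableOn)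
      intro x hx
      rw [interior_Ici] at hx
      obtain ⟨ht₀0, ht₀ge⟩ := ht₀ x hx.le
      have hder : HasDerivAt (fun t => R t - d * t) (γ * I x - d) x := by
        have h2 : HasDerivAt (fun t : ℝ => d * t) d x := by
          simpa using (hasDerivAt_id x).const_mul d
        exact (hR' x (le_trans (ht₀ t₀ le_rfl).2 hx.le)).sub h2
      rw [show (R - fun y => d * y) = (fun t => R t - d * t) from rfl, hder.deriv]
      have : γ * (L / 2) ≤ γ * I x := mul_le_mul_of_nonneg_left ht₀0.le hγ.le
      rw [hd]
      linarith
    have ht₀0 : (0:ℝ) ≤ t₀ := (ht₀ t₀ le_rfl).2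
    set t₁ := t₀ + (N + 1) / d with ht₁
    have ht₁ge : t₀ ≤ t₁ := by
      have h : 0 ≤ (N + 1) / d := by positivity
      rw [ht₁]; linarith
    have hkey := hgmono (Set.self_mem_Ici) ht₁ge ht₁ge
    have hmul : d * t₁ - d * t₀ = N + 1 := by
      rw [ht₁]; field_simp; ring
    have h1 : R t₁ ≤ N := hRle t₁ (le_trans ht₀0 ht₁ge)
    have h2 : 0 ≤ R t₀ := hR0' t₀ ht₀0
    have hkey' : R t₀ - d * t₀ ≤ R t₁ - d * t₁ := hkey
    linarith
  refine ⟨⟨Sinf, hSlim⟩, ⟨Rinf, hRlim⟩, ?_⟩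
  rw [← hLzero]
  exact hIlim
end

section
/- In the modified SIR model, if additionally I(t) ≥ 0 for all t ≥ 0, I is continuous on [0,∞), and R(t) converges to a finite limit R_∞ as t → ∞, then the total long-term time at home satisfies the bound T_h(∞) = (1-a)·(R_∞ - R(0))/γ ≤ (1-a)·N/γ. -/
open Filter

/-- **Upper bound on the total long-term time at home.**
If additionally `I t ≥ 0` for all `t ≥ 0`, `I` is continuous on `[0,∞)`, and
`R(t) → R_∞` (finite) as `t → ∞`, then the total long-term time at home
`T_h(∞) = lim_{t→∞} (1−a)·∫₀ᵗ I u du` equals `(1−a)·(R_∞ − R 0)/γ` and is at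
most `(1−a)·N/γ`. -/
theorem modifiedSIR_time_at_home_bound
    (N β γ a : ℝ) (hN : 0 < N) (hβ : 0 < β) (hγ : 0 < γ)
    (ha : a ∈ Set.Icc (0:ℝ) 1)
    (S I R : ℝ → ℝ)
    (hS : Differentiable ℝ S) (hI : Differentiable ℝ I) (hR : Differentiable ℝ R)
    (hS' : ∀ t ≥ (0:ℝ), HasDerivAt S (-(a * β / N) * I t * S t) t)
    (hI' : ∀ t ≥ (0:ℝ), HasDerivAt I ((a * β / N) * I t * S t - γ * I t) t)
    (hR' : ∀ t ≥ (0:ℝ), HasDerivAt R (γ * I t) t)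
    (hS0 : 0 ≤ S 0) (hI0 : 0 ≤ I 0) (hR0 : 0 ≤ R 0)
    (hsum : S 0 + I 0 + R 0 = N)
    (hInonneg : ∀ t ≥ (0:ℝ), 0 ≤ I t)
    (hIcont : ContinuousOn I (Set.Ici 0))
    (Rinf : ℝ) (hRlim : Tendsto R atTop (nhds Rinf)) :
    (Tendsto (fun t => (1 - a) * ∫ u in (0:ℝ)..t, I u) atTop
      (nhds ((1 - a) * (Rinf - R 0) / γ))) ∧
    (1 - a) * (Rinf - R 0) / γ ≤ (1 - a) * N / γ := by
  obtain ⟨ha0, ha1⟩ := ha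
  have hIc : Continuous I := hI.continuous
  have huicc : ∀ t : ℝ, 0 ≤ t → ∀ x ∈ Set.uIcc (0:ℝ) t, 0 ≤ x := by
    intro t ht x hx
    rw [Set.uIcc_of_le ht] at hx
    exact hx.1
  -- FTC for R : ∫₀ᵗ γ I = R t − R 0
  have hRint : ∀ t ≥ (0:ℝ), (∫ u in (0:ℝ)..t, I u) = (R t - R 0) / γ := by
    intro t ht
    have h0 : ∀ x ∈ Set.uIcc (0:ℝ) t, HasDerivAt R ((fun u => γ * I u) x) x :=
      fun x hx => hR' x (huicc t ht x hx)
    have hInt : IntervalIntegrable (fun u => γ * I u) MeasureTheory.volume 0 t :=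
      (continuous_const.mul hIc).intervalIntegrable 0 t
    have := intervalIntegral.integral_eq_sub_of_hasDerivAt h0 hInt
    rw [intervalIntegral.integral_const_mul] at this
    field_simp
    linarith [this]
  -- sum is constant = N
  have hsumt : ∀ t ≥ (0:ℝ), S t + I t + R t = N := by
    intro t ht
    have h0 : ∀ x ∈ Set.uIcc (0:ℝ) t, HasDerivAt (fun u => S u + I u + R u) ((fun _ => (0:ℝ)) x) x := by
      intro x hx
      have hx0 := huicc t ht x hx
      have h1 := ((hS' x hx0).add (hI' x hx0)).add (hR' x hx0)
      convert h1 using 1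
      · rfl
      · rfl
      · rfl
      · ring
    have := intervalIntegral.integral_eq_sub_of_hasDerivAt h0 intervalIntegrable_const
    simp only [intervalIntegral.integral_zero] at this
    linarith [this]
  -- S is nonnegative on [0,∞) via integrating factor
  have hSnn : ∀ t ≥ (0:ℝ), 0 ≤ S t := by
    intro t ht
    set c := a * β / N with hc
    set E : ℝ → ℝ := fun u => ∫ v in (0:ℝ)..u, c * I v with hEdef
    have hE : ∀ x : ℝ, HasDerivAt E (c * I x) x := by
      intro x
      exact intervalIntegral.integral_hasDerivAt_right
        ((continuous_const.mul hIc).intervalIntegrable 0 x)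
        ((continuous_const.mul hIc).stronglyMeasurableAtFilter _ _)
        (continuous_const.mul hIc).continuousAt
    have hg : ∀ x ∈ Set.uIcc (0:ℝ) t,
        HasDerivAt (fun u => S u * Real.exp (E u)) ((fun _ => (0:ℝ)) x) x := by
      intro x hx
      have hx0 := huicc t ht x hx
      have h1 := (hS' x hx0).mul ((hE x).exp)
      convert h1 using 1
      · rfl
      · rfl
      · rfl
      · ring
    have hftc := intervalIntegral.integral_eq_sub_of_hasDerivAt hg intervalIntegrable_const
    simp only [intervalIntegral.integral_zero] at hftc
    have hE0 : E 0 = 0 := intervalIntegral.integral_same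
    have heq : S t * Real.exp (E t) = S 0 := by
      rw [hE0, Real.exp_zero, mul_one] at hftc
      linarith
    exact (mul_nonneg_iff_of_pos_right (Real.exp_pos (E t))).mp (heq ▸ hS0)
  have hRN : ∀ t ≥ (0:ℝ), R t ≤ N := by
    intro t ht
    have := hsumt t ht
    have h1 := hSnn t ht
    have h2 := hInonneg t ht
    linarith
  have hRinfN : Rinf ≤ N :=
    le_of_tendsto hRlim (eventually_atTop.2 ⟨0, fun t ht => hRN t ht⟩)
  constructor
  · have h1 : Tendsto (fun t => (1 - a) * ((R t - R 0) / γ)) atTop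
        (nhds ((1 - a) * ((Rinf - R 0) / γ))) :=
      (((hRlim.sub_const (R 0)).div_const γ).const_mul (1 - a))
    rw [mul_div_assoc]
    refine h1.congr' ?_
    filter_upwards [eventually_ge_atTop (0:ℝ)] with t ht
    rw [hRint t ht]
  · rw [mul_div_assoc, mul_div_assoc]
    have h1a : 0 ≤ 1 - a := by linarith
    apply mul_le_mul_of_nonneg_left _ h1a
    gcongr
    linarith
end

section
/- Final size equation: in the modified SIR model, if additionally S and R are continuous on [0,∞), I(t) ≥ 0 and S(t) ≥ 0 for all t ≥ 0, I(t) → 0 as t → ∞, and S(t) → S_∞ and R(t) → R_∞ as t → ∞, then S_∞ = N - R_∞ and S_∞ = S(0)·exp(-(aβ/(γN))·(R_∞ - R(0))); equivalently, writing R₀ = β/γ, s₀ = S(0)/N, r₀ = R(0)/N, and r_∞ = R_∞/N, the final recovered fraction satisfies 1 - r_∞ = s₀·exp(-a·R₀·(r_∞ - r₀)). -/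
open Filter

private lemma constOnIci (f : ℝ → ℝ)
    (hf : ∀ t ≥ (0:ℝ), HasDerivAt f 0 t)
    (hc : ContinuousOn f (Set.Ici 0)) :
    ∀ t ≥ (0:ℝ), f t = f 0 := by
  intro t ht
  refine constant_of_has_deriv_right_zero (f := f) (a := 0) (b := t)
    (hc.mono (Set.Icc_subset_Ici_self)) ?_ t (Set.mem_Icc.2 ⟨ht, le_rfl⟩)
  intro x hx
  exact ((hf x hx.1).hasDerivWithinAt)

/-- **Final size equation for the modified SIR model.**
If `S` and `R` are continuous on `[0,∞)`, `I t ≥ 0` and `S t ≥ 0` for all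
`t ≥ 0`, `I(t) → 0`, `S(t) → S_∞` and `R(t) → R_∞` as `t → ∞`, then
`S_∞ = N − R_∞` and `S_∞ = S 0 · exp (−(aβ/(γN))·(R_∞ − R 0))`; equivalently,
with `R₀ = β/γ`, `s₀ = S 0 / N`, `r₀ = R 0 / N` and `r_∞ = R_∞ / N`, the final
recovered fraction satisfies `1 − r_∞ = s₀ · exp (−a·R₀·(r_∞ − r₀))`. -/
theorem modifiedSIR_final_size_equation
    (N β γ a : ℝ) (hN : 0 < N) (hβ : 0 < β) (hγ : 0 < γ)
    (ha : a ∈ Set.Icc (0:ℝ) 1)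
    (S I R : ℝ → ℝ)
    (hS : Differentiable ℝ S) (hI : Differentiable ℝ I) (hR : Differentiable ℝ R)
    (hS' : ∀ t ≥ (0:ℝ), HasDerivAt S (-(a * β / N) * I t * S t) t)
    (hI' : ∀ t ≥ (0:ℝ), HasDerivAt I ((a * β / N) * I t * S t - γ * I t) t)
    (hR' : ∀ t ≥ (0:ℝ), HasDerivAt R (γ * I t) t)
    (hS0 : 0 ≤ S 0) (hI0 : 0 ≤ I 0) (hR0 : 0 ≤ R 0)
    (hsum : S 0 + I 0 + R 0 = N)
    (hScont : ContinuousOn S (Set.Ici 0)) (hRcont : ContinuousOn R (Set.Ici 0))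
    (hpos : ∀ t ≥ (0:ℝ), 0 ≤ I t ∧ 0 ≤ S t)
    (hIlim : Tendsto I atTop (nhds 0))
    (Sinf Rinf : ℝ)
    (hSlim : Tendsto S atTop (nhds Sinf))
    (hRlim : Tendsto R atTop (nhds Rinf)) :
    Sinf = N - Rinf ∧
    Sinf = S 0 * Real.exp (-(a * β / (γ * N)) * (Rinf - R 0)) ∧
    1 - Rinf / N = (S 0 / N) * Real.exp (-(a * (β / γ)) * (Rinf / N - R 0 / N)) := by
  have hNne : N ≠ 0 := hN.ne'
  have hγne : γ ≠ 0 := hγ.ne'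
  set c : ℝ := a * β / (γ * N) with hc
  -- Part 1: total population is conserved
  have hGconst : ∀ t ≥ (0:ℝ), S t + I t + R t = S 0 + I 0 + R 0 := by
    refine constOnIci (fun t => S t + I t + R t) ?_ ?_
    · intro t ht
      have := ((hS' t ht).add (hI' t ht)).add (hR' t ht)
      refine this.congr_deriv ?_
      ring
    · exact Continuous.continuousOn (by
        exact (hS.continuous.add hI.continuous).add hR.continuous)
  have hGlim : Tendsto (fun t => S t + I t + R t) atTop (nhds (Sinf + 0 + Rinf)) :=
    (hSlim.add hIlim).add hRlim
  have hGlim' : Tendsto (fun t => S t + I t + R t) atTop (nhds N) := by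
    have heq : (fun t => S t + I t + R t) =ᶠ[atTop] fun _ => N := by
      filter_upwards [eventually_ge_atTop (0:ℝ)] with t ht
      rw [hGconst t ht, hsum]
    exact Tendsto.congr' heq.symm tendsto_const_nhds
  have h1 : Sinf = N - Rinf := by
    have := tendsto_nhds_unique hGlim hGlim'
    linarith
  -- Part 2: the conserved quantity S * exp(c * R)
  have hFconst : ∀ t ≥ (0:ℝ), S t * Real.exp (c * R t) = S 0 * Real.exp (c * R 0) := by
    refine constOnIci (fun t => S t * Real.exp (c * R t)) ?_ ?_
    · intro t ht
      have hRc : HasDerivAt (fun t => c * R t) (c * (γ * I t)) t :=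
        (hR' t ht).const_mul c
      have hexp : HasDerivAt (fun t => Real.exp (c * R t))
          (Real.exp (c * R t) * (c * (γ * I t))) t := hRc.exp
      have := (hS' t ht).mul hexp
      refine this.congr_deriv ?_
      have h3 : c * (γ * I t) = a * β / N * I t := by
        rw [← mul_assoc, hc]; field_simp
      rw [h3]; ring
    · exact hScont.mul (Real.continuous_exp.comp_continuousOn
        (continuousOn_const.mul hRcont))
  have hFlim : Tendsto (fun t => S t * Real.exp (c * R t)) atTop
      (nhds (Sinf * Real.exp (c * Rinf))) :=
    hSlim.mul ((Real.continuous_exp.tendsto _).comp (hRlim.const_mul c))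
  have hFlim' : Tendsto (fun t => S t * Real.exp (c * R t)) atTop
      (nhds (S 0 * Real.exp (c * R 0))) := by
    have heq : (fun t => S t * Real.exp (c * R t)) =ᶠ[atTop]
        fun _ => S 0 * Real.exp (c * R 0) := by
      filter_upwards [eventually_ge_atTop (0:ℝ)] with t ht
      exact hFconst t ht
    exact Tendsto.congr' heq.symm tendsto_const_nhds
  have hkey : Sinf * Real.exp (c * Rinf) = S 0 * Real.exp (c * R 0) :=
    tendsto_nhds_unique hFlim hFlim'
  have h2 : Sinf = S 0 * Real.exp (-(a * β / (γ * N)) * (Rinf - R 0)) := by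
    have hne : Real.exp (c * Rinf) ≠ 0 := (Real.exp_pos _).ne'
    have : Sinf = S 0 * Real.exp (c * R 0) / Real.exp (c * Rinf) := by
      field_simp [hne] at hkey ⊢
      linarith [hkey]
    rw [this, mul_div_assoc, ← Real.exp_sub]
    congr 1
    rw [hc]; ring
  refine ⟨h1, h2, ?_⟩
  have hexpeq : -(a * (β / γ)) * (Rinf / N - R 0 / N) = -(a * β / (γ * N)) * (Rinf - R 0) := by
    field_simp
  rw [hexpeq]
  have : 1 - Rinf / N = Sinf / N := by
    rw [h1]; field_simp
  rw [this, h2]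
  ring
end

section
/- Not everyone is infected over the course of the disease: in the modified SIR model with S(0) > 0, if additionally S and R are continuous on [0,∞), I(t) ≥ 0 for all t ≥ 0, and R(t) converges to a finite limit R_∞ ≤ N as t → ∞, then the limit S_∞ = lim_{t→∞} S(t) satisfies S_∞ ≥ S(0)·exp(-aβ/γ) > 0; in particular R_∞ < N, i.e., the final recovered fraction r_∞ = R_∞/N is strictly less than 1. -/
open Filter

/-- **Not everyone is infected over the course of the disease.**
In the modified SIR model with `S 0 > 0`, if `S` and `R` are continuous on
`[0,∞)`, `I t ≥ 0` for all `t ≥ 0`, and `R(t) → R_∞ ≤ N` as `t → ∞`, then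
`S(t)` converges to a limit `S_∞` with `S_∞ ≥ S 0 · exp (−aβ/γ) > 0`;
in particular `R_∞ < N`, i.e. the final recovered fraction `R_∞/N < 1`. -/
theorem modifiedSIR_not_everyone_infected
    (N β γ a : ℝ) (hN : 0 < N) (hβ : 0 < β) (hγ : 0 < γ)
    (ha : a ∈ Set.Icc (0:ℝ) 1)
    (S I R : ℝ → ℝ)
    (hS : Differentiable ℝ S) (hI : Differentiable ℝ I) (hR : Differentiable ℝ R)
    (hS' : ∀ t ≥ (0:ℝ), HasDerivAt S (-(a * β / N) * I t * S t) t)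
    (hI' : ∀ t ≥ (0:ℝ), HasDerivAt I ((a * β / N) * I t * S t - γ * I t) t)
    (hR' : ∀ t ≥ (0:ℝ), HasDerivAt R (γ * I t) t)
    (hS0 : 0 ≤ S 0) (hI0 : 0 ≤ I 0) (hR0 : 0 ≤ R 0)
    (hsum : S 0 + I 0 + R 0 = N)
    (hS0pos : 0 < S 0)
    (hScont : ContinuousOn S (Set.Ici 0)) (hRcont : ContinuousOn R (Set.Ici 0))
    (hInonneg : ∀ t ≥ (0:ℝ), 0 ≤ I t)
    (Rinf : ℝ) (hRlim : Tendsto R atTop (nhds Rinf)) (hRinfN : Rinf ≤ N) :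
    ∃ Sinf : ℝ, Tendsto S atTop (nhds Sinf) ∧
      S 0 * Real.exp (-(a * β / γ)) ≤ Sinf ∧
      0 < S 0 * Real.exp (-(a * β / γ)) ∧
      Rinf < N ∧ Rinf / N < 1 := by
  obtain ⟨ha0, ha1⟩ := ha
  have hNne : N ≠ 0 := ne_of_gt hN
  have hγne : γ ≠ 0 := ne_of_gt hγ
  set c : ℝ := a * β / (γ * N) with hc
  have hc0 : 0 ≤ c := by positivity
  have hcN : c * N = a * β / γ := by rw [hc]; field_simp
  -- key identity
  have key : ∀ t ≥ (0:ℝ), S t * Real.exp (c * R t) = S 0 * Real.exp (c * R 0) := by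
    intro t ht
    have hcont : ContinuousOn (fun u => S u * Real.exp (c * R u)) (Set.Icc 0 t) :=
      (hS.continuous.mul (Real.continuous_exp.comp (continuous_const.mul hR.continuous))).continuousOn
    have hderiv : ∀ x ∈ Set.Ico (0:ℝ) t,
        HasDerivWithinAt (fun u => S u * Real.exp (c * R u)) 0 (Set.Ici x) x := by
      intro x hx
      have h1 := hS' x hx.1
      have h2 := hR' x hx.1
      have h3 : HasDerivAt (fun u => Real.exp (c * R u))
          (Real.exp (c * R x) * (c * (γ * I x))) x :=
        (h2.const_mul c).exp
      have h4 := h1.mul h3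
      have hzero : (-(a * β / N) * I x * S x) * Real.exp (c * R x)
          + S x * (Real.exp (c * R x) * (c * (γ * I x))) = 0 := by
        rw [hc]; field_simp; ring
      rw [hzero] at h4
      exact h4.hasDerivWithinAt
    exact constant_of_has_deriv_right_zero hcont hderiv t ⟨ht, le_refl t⟩
  -- sum constant
  have sumconst : ∀ t ≥ (0:ℝ), S t + I t + R t = N := by
    intro t ht
    have hcont : ContinuousOn (fun u => S u + I u + R u) (Set.Icc 0 t) :=
      ((hS.continuous.add hI.continuous).add hR.continuous).continuousOn
    have hderiv : ∀ x ∈ Set.Ico (0:ℝ) t,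
        HasDerivWithinAt (fun u => S u + I u + R u) 0 (Set.Ici x) x := by
      intro x hx
      have h := ((hS' x hx.1).add (hI' x hx.1)).add (hR' x hx.1)
      have hzero : -(a * β / N) * I x * S x + ((a * β / N) * I x * S x - γ * I x) + γ * I x = 0 := by
        ring
      rw [hzero] at h
      exact h.hasDerivWithinAt
    have := constant_of_has_deriv_right_zero hcont hderiv t ⟨ht, le_refl t⟩
    simpa [hsum] using this
  -- explicit formula for S
  have hSform : ∀ t ≥ (0:ℝ), S t = S 0 * Real.exp (c * R 0 - c * R t) := by
    intro t ht
    have h := key t ht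
    have hexp : Real.exp (c * R t) ≠ 0 := (Real.exp_pos _).ne'
    field_simp [Real.exp_sub] at h ⊢
    rw [mul_sub, Real.exp_sub, ← mul_div_assoc, eq_div_iff hexp]; linarith [h]
  have hSpos : ∀ t ≥ (0:ℝ), 0 < S t := by
    intro t ht
    rw [hSform t ht]
    positivity
  have hRleN : ∀ t ≥ (0:ℝ), R t ≤ N := by
    intro t ht
    have := sumconst t ht
    have := hSpos t ht
    have := hInonneg t ht
    linarith
  -- lower bound for S
  have hSlb : ∀ t ≥ (0:ℝ), S 0 * Real.exp (-(a * β / γ)) ≤ S t := by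
    intro t ht
    rw [hSform t ht]
    have harg : -(a * β / γ) ≤ c * R 0 - c * R t := by
      have h1 : c * R t ≤ c * N := mul_le_mul_of_nonneg_left (hRleN t ht) hc0
      have h2 : 0 ≤ c * R 0 := mul_nonneg hc0 hR0
      linarith [hcN ▸ h1]
    exact mul_le_mul_of_nonneg_left (Real.exp_le_exp.mpr harg) hS0pos.le
  have hεpos : 0 < S 0 * Real.exp (-(a * β / γ)) := by positivity
  -- Rinf < N
  have hRub : ∀ t ≥ (0:ℝ), R t ≤ N - S 0 * Real.exp (-(a * β / γ)) := by
    intro t ht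
    have h1 := sumconst t ht
    have h2 := hInonneg t ht
    have h3 := hSlb t ht
    linarith
  have hRinf_lt : Rinf < N := by
    have : Rinf ≤ N - S 0 * Real.exp (-(a * β / γ)) := by
      apply le_of_tendsto hRlim
      filter_upwards [eventually_ge_atTop (0:ℝ)] with t ht using hRub t ht
    linarith
  -- limit of S
  refine ⟨S 0 * Real.exp (c * R 0 - c * Rinf), ?_, ?_, hεpos, hRinf_lt, (div_lt_one hN).mpr hRinf_lt⟩
  · have htend : Tendsto (fun t => S 0 * Real.exp (c * R 0 - c * R t)) atTop
        (nhds (S 0 * Real.exp (c * R 0 - c * Rinf))) := by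
      apply Tendsto.const_mul
      exact (Real.continuous_exp.tendsto _).comp (tendsto_const_nhds.sub (hRlim.const_mul c))
    refine htend.congr' ?_
    filter_upwards [eventually_ge_atTop (0:ℝ)] with t ht using (hSform t ht).symm
  · have harg : -(a * β / γ) ≤ c * R 0 - c * Rinf := by
      have h1 : c * Rinf ≤ c * N := mul_le_mul_of_nonneg_left hRinfN hc0
      have h2 : 0 ≤ c * R 0 := mul_nonneg hc0 hR0
      linarith [hcN ▸ h1]
    exact mul_le_mul_of_nonneg_left (Real.exp_le_exp.mpr harg) hS0pos.le
end

section
/- Uniqueness of the final size: let R₀ > 0, a ∈ (0,1], s₀ ∈ (0,1), r₀ ∈ [0,1) with s₀ + r₀ < 1 (i.e., the initial infected fraction i₀ = 1 - s₀ - r₀ is positive). Then the function h(s) = s - s₀·exp(-a·R₀·(1 - r₀ - s)) has exactly one zero in the open interval (0, s₀). -/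
/-- **Uniqueness of the final size.**
Let `R₀ > 0`, `a ∈ (0,1]`, `s₀ ∈ (0,1)`, `r₀ ∈ [0,1)` with `s₀ + r₀ < 1`.
Then `h(s) = s − s₀·exp (−a·R₀·(1 − r₀ − s))` has exactly one zero in the open
interval `(0, s₀)`. -/
theorem finalSize_unique_zero
    (R₀ a s₀ r₀ : ℝ)
    (hR₀ : 0 < R₀) (ha : a ∈ Set.Ioc (0:ℝ) 1)
    (hs₀ : s₀ ∈ Set.Ioo (0:ℝ) 1) (hr₀ : r₀ ∈ Set.Ico (0:ℝ) 1)
    (hsum : s₀ + r₀ < 1) :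
    ∃! s : ℝ, s ∈ Set.Ioo 0 s₀ ∧
      s - s₀ * Real.exp (-(a * R₀) * (1 - r₀ - s)) = 0 := by
  obtain ⟨ha0, ha1⟩ := ha
  obtain ⟨hs0, hs1⟩ := hs₀
  set k : ℝ := a * R₀ with hk
  have hkpos : 0 < k := mul_pos ha0 hR₀
  set f : ℝ → ℝ := fun s => s - s₀ * Real.exp (-k * (1 - r₀ - s)) with hf
  -- concavity of f on univ
  have hconc : ConcaveOn ℝ Set.univ f := by
    have haff : ∀ s : ℝ, -k * (1 - r₀ - s) = k * s + (-k * (1 - r₀)) := by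
      intro s; ring
    have hA : ConvexOn ℝ Set.univ (fun s : ℝ => Real.exp (-k * (1 - r₀ - s))) := by
      have hmap : (fun s : ℝ => Real.exp (-k * (1 - r₀ - s)))
          = (Real.exp ∘ (AffineMap.lineMap (-k * (1 - r₀)) (k + (-k * (1 - r₀))) : ℝ →ᵃ[ℝ] ℝ)) := by
        funext s
        simp [AffineMap.lineMap_apply, haff s]
        ring_nf
      have := convexOn_exp.comp_affineMap
        (AffineMap.lineMap (-k * (1 - r₀)) (k + (-k * (1 - r₀))) : ℝ →ᵃ[ℝ] ℝ)
      rw [hmap]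
      simpa using this
    have hB : ConvexOn ℝ Set.univ (fun s : ℝ => s₀ * Real.exp (-k * (1 - r₀ - s))) := by
      simpa [smul_eq_mul] using hA.smul (le_of_lt hs0)
    have hC : ConcaveOn ℝ Set.univ (fun s : ℝ => -(s₀ * Real.exp (-k * (1 - r₀ - s)))) := hB.neg
    have hid : ConcaveOn ℝ Set.univ (fun s : ℝ => s) :=
      concaveOn_id convex_univ
    have h4 := hid.add hC
    have heq : f = fun s : ℝ => s + -(s₀ * Real.exp (-k * (1 - r₀ - s))) := by
      funext s; simp [hf]; ring
    rw [heq]; exact h4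
  -- continuity
  have hcont : Continuous f := by
    apply Continuous.sub continuous_id
    exact continuous_const.mul (Real.continuous_exp.comp (by continuity))
  -- sign at endpoints
  have hf0 : f 0 < 0 := by
    have : 0 < s₀ * Real.exp (-k * (1 - r₀ - 0)) :=
      mul_pos hs0 (Real.exp_pos _)
    simp only [hf]
    linarith
  have hfs₀ : 0 < f s₀ := by
    have harg : -k * (1 - r₀ - s₀) < 0 := by
      apply mul_neg_of_neg_of_pos
      · linarith
      · linarith
    have hexplt : Real.exp (-k * (1 - r₀ - s₀)) < 1 := by
      calc Real.exp (-k * (1 - r₀ - s₀)) < Real.exp 0 := Real.exp_lt_exp.2 harg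
        _ = 1 := Real.exp_zero
    have : s₀ * Real.exp (-k * (1 - r₀ - s₀)) < s₀ * 1 :=
      mul_lt_mul_of_pos_left hexplt hs0
    simp only [hf]
    linarith
  -- existence via IVT
  have hsub : Set.Ioo (f 0) (f s₀) ⊆ f '' Set.Ioo 0 s₀ :=
    intermediate_value_Ioo (le_of_lt hs0) hcont.continuousOn
  obtain ⟨x, hxmem, hxval⟩ := hsub ⟨hf0, hfs₀⟩
  -- uniqueness
  refine ⟨x, ⟨hxmem, hxval⟩, ?_⟩
  -- first show: any two zeros in Ioo 0 s₀ are equal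
  have key : ∀ y z : ℝ, y ∈ Set.Ioo 0 s₀ → z ∈ Set.Ioo 0 s₀ → f y = 0 → f z = 0 →
      y < z → False := by
    intro y z hy hz hfy hfz hyz
    set t : ℝ := (z - y) / (s₀ - y) with ht
    have hden : 0 < s₀ - y := by linarith [hy.2]
    have ht0 : 0 < t := div_pos (by linarith) hden
    have ht1 : t < 1 := (div_lt_one hden).2 (by linarith [hz.2])
    have hcomb : (1 - t) * y + t * s₀ = z := by
      field_simp [ht]
      have h' : t * (s₀ - y) = z - y := by rw [ht]; exact div_mul_cancel₀ _ (ne_of_gt hden)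
      linear_combination h'
    have := hconc.2 (Set.mem_univ y) (Set.mem_univ s₀)
      (by linarith : (0:ℝ) ≤ 1 - t) (le_of_lt ht0) (by ring)
    rw [smul_eq_mul, smul_eq_mul, smul_eq_mul, smul_eq_mul, hcomb, hfz, hfy] at this
    nlinarith
  intro y ⟨hymem, hyval⟩
  rcases lt_trichotomy y x with h | h | h
  · exact absurd (key y x hymem hxmem hyval hxval h) id
  · exact h
  · exact absurd (key x y hxmem hymem hxval hyval h) id
end

section
/- Monotonicity of the final size in the attendance rate: let R₀ > 0, s₀ ∈ (0,1), r₀ ∈ [0,1) with s₀ + r₀ < 1, and let 0 < a₁ < a₂ ≤ 1. If s₁ ∈ (0, s₀) satisfies s₁ = s₀·exp(-a₁·R₀·(1 - r₀ - s₁)) and s₂ ∈ (0, s₀) satisfies s₂ = s₀·exp(-a₂·R₀·(1 - r₀ - s₂)), and each sᵢ is the unique zero in (0, s₀) of hᵢ(s) = s - s₀·exp(-aᵢ·R₀·(1 - r₀ - s)), then s₂ < s₁; equivalently, a higher attendance rate yields a strictly larger final recovered fraction r_∞ = 1 - s. -/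
/-!
The right-hand side of the final size relation decreases strictly in the attendance rate `a`,
so at the solution `s₂` for `a₂` the map for the smaller rate `a₁` lies above the diagonal,
while at `s₀` every such map lies below it. The intermediate value theorem yields a solution
for `a₁` in `(s₂, s₀)`, which by uniqueness is `s₁`.
-/

open Set

theorem exists_mem_Ioo_apply_eq_self {f : ℝ → ℝ} {l u : ℝ} (hlu : l ≤ u)
    (hf : ContinuousOn f (Icc l u)) (hl : l < f l) (hu : f u < u) :
    ∃ x ∈ Ioo l u, f x = x := by
  have hg : ContinuousOn (fun x => x - f x) (Icc l u) := continuousOn_id.sub hf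
  obtain ⟨x, hx, hgx⟩ := intermediate_value_Ioo hlu hg
    (show (0 : ℝ) ∈ Ioo (l - f l) (u - f u) from ⟨by linarith, by linarith⟩)
  exact ⟨x, hx, by linarith [show x - f x = 0 from hgx]⟩

noncomputable def finalSizeMap (R₀ s₀ r₀ a s : ℝ) : ℝ :=
  s₀ * Real.exp (-(a * R₀) * (1 - r₀ - s))

namespace finalSizeMap

variable {R₀ s₀ r₀ a : ℝ}

theorem continuous : Continuous (finalSizeMap R₀ s₀ r₀ a) := by
  unfold finalSizeMap
  fun_prop

theorem lt_of_attendance_lt {a₁ a₂ s : ℝ} (hR₀ : 0 < R₀) (hs₀ : 0 < s₀) (hs : s < 1 - r₀)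
    (ha : a₁ < a₂) : finalSizeMap R₀ s₀ r₀ a₂ s < finalSizeMap R₀ s₀ r₀ a₁ s := by
  unfold finalSizeMap
  gcongr

theorem apply_initial_lt (hR₀ : 0 < R₀) (ha : 0 < a) (hs₀ : 0 < s₀) (hs₀r₀ : s₀ < 1 - r₀) :
    finalSizeMap R₀ s₀ r₀ a s₀ < s₀ := by
  unfold finalSizeMap
  have hexp : Real.exp (-(a * R₀) * (1 - r₀ - s₀)) < 1 :=
    Real.exp_lt_one_iff.2 (by nlinarith [mul_pos (mul_pos ha hR₀) (sub_pos.2 hs₀r₀)])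
  nlinarith

end finalSizeMap

theorem finalSize_antitone_in_attendance_general
    (R₀ s₀ r₀ a₁ a₂ : ℝ)
    (hR₀ : 0 < R₀)
    (hs₀ : s₀ ∈ Set.Ioo (0:ℝ) 1)
    (hsum : s₀ + r₀ < 1)
    (ha₁ : 0 < a₁) (ha₁₂ : a₁ < a₂)
    (s₁ s₂ : ℝ)
    (huniq₁ : ∀ s ∈ Set.Ioo 0 s₀,
      s = s₀ * Real.exp (-(a₁ * R₀) * (1 - r₀ - s)) → s = s₁)
    (hs₂ : s₂ ∈ Set.Ioo 0 s₀)
    (heq₂ : s₂ = s₀ * Real.exp (-(a₂ * R₀) * (1 - r₀ - s₂))) :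
    s₂ < s₁ ∧ 1 - s₁ < 1 - s₂ := by
  have hs₂r₀ : s₂ < 1 - r₀ := by linarith [hs₂.2]
  have habove : s₂ < finalSizeMap R₀ s₀ r₀ a₁ s₂ :=
    heq₂.trans_lt <| finalSizeMap.lt_of_attendance_lt hR₀ hs₀.1 hs₂r₀ ha₁₂
  have hbelow : finalSizeMap R₀ s₀ r₀ a₁ s₀ < s₀ :=
    finalSizeMap.apply_initial_lt hR₀ ha₁ hs₀.1 (by linarith)
  obtain ⟨x, hx, hfx⟩ := exists_mem_Ioo_apply_eq_self hs₂.2.le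
    finalSizeMap.continuous.continuousOn habove hbelow
  obtain rfl := huniq₁ x ⟨hs₂.1.trans hx.1, hx.2⟩ hfx.symm
  exact ⟨hx.1, by linarith [hx.1]⟩

/-- **Monotonicity of the final size in the attendance rate.**
Let `R₀ > 0`, `s₀ ∈ (0,1)`, `r₀ ∈ [0,1)` with `s₀ + r₀ < 1`, and
`0 < a₁ < a₂ ≤ 1`.  If `s₁ ∈ (0, s₀)` satisfies the final size relation for
`a₁`, `s₂ ∈ (0, s₀)` satisfies it for `a₂`, and each `sᵢ` is the unique
solution in `(0, s₀)` of the corresponding relation, then `s₂ < s₁`;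
equivalently a higher attendance rate yields a strictly larger final recovered
fraction `1 − s`. -/
theorem finalSize_antitone_in_attendance
    (R₀ s₀ r₀ a₁ a₂ : ℝ)
    (hR₀ : 0 < R₀)
    (hs₀ : s₀ ∈ Set.Ioo (0:ℝ) 1) (hr₀ : r₀ ∈ Set.Ico (0:ℝ) 1)
    (hsum : s₀ + r₀ < 1)
    (ha₁ : 0 < a₁) (ha₁₂ : a₁ < a₂) (ha₂ : a₂ ≤ 1)
    (s₁ s₂ : ℝ)
    (hs₁ : s₁ ∈ Set.Ioo 0 s₀)
    (heq₁ : s₁ = s₀ * Real.exp (-(a₁ * R₀) * (1 - r₀ - s₁)))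
    (huniq₁ : ∀ s ∈ Set.Ioo 0 s₀,
      s = s₀ * Real.exp (-(a₁ * R₀) * (1 - r₀ - s)) → s = s₁)
    (hs₂ : s₂ ∈ Set.Ioo 0 s₀)
    (heq₂ : s₂ = s₀ * Real.exp (-(a₂ * R₀) * (1 - r₀ - s₂)))
    (huniq₂ : ∀ s ∈ Set.Ioo 0 s₀,
      s = s₀ * Real.exp (-(a₂ * R₀) * (1 - r₀ - s)) → s = s₂) :
    s₂ < s₁ ∧ 1 - s₁ < 1 - s₂ :=
  finalSize_antitone_in_attendance_general R₀ s₀ r₀ a₁ a₂ hR₀ hs₀ hsum ha₁ ha₁₂ s₁ s₂ huniq₁ hs₂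
    heq₂
end
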